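/- Let l = (cos α, sin α · v) and r = (cos β, sin β · w) be unit quaternions with v, w purely imaginary unit quaternions, α, β ∈ (0, π), and suppose cos α ≠ cos β. Then the map g : q ↦ l q r⁻¹ of ℍ has no nonzero fixed point. -/

import Mathlib

open Quaternion

/-
A nonzero fixed point `q` of `q ↦ l q r⁻¹` forces `r ≠ 0` and makes `l = q r q⁻¹` a conjugate
of `r`. Since `re (a b) = re (b a)`, conjugate quaternions have the same real part, so
`cos α = re l = re r = cos β`.
-/

namespace Quaternion

variable {R : Type*}

theorem re_mul_comm [CommRing R] (a b : ℍ[R]) : (a * b).re = (b * a).re := by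
  simp only [re_mul]
  ring

variable [Field R] [LinearOrder R] [IsStrictOrderedRing R]

theorem re_mul_mul_inv {q : ℍ[R]} (hq : q ≠ 0) (r : ℍ[R]) : (q * r * q⁻¹).re = r.re := by
  rw [re_mul_comm, ← mul_assoc, inv_mul_cancel₀ hq, one_mul]

theorem re_eq_of_mul_mul_inv_eq {l q r : ℍ[R]} (hq : q ≠ 0) (h : l * q * r⁻¹ = q) :
    l.re = r.re := by
  have hr : r ≠ 0 := by
    rintro rfl
    exact hq (by simpa using h.symm)
  have hlq : l * q = q * r := by
    rw [← inv_mul_cancel_right₀ hr (l * q), h]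
  have hl : l = q * r * q⁻¹ := by
    rw [← hlq, mul_inv_cancel_right₀ hq]
  rw [hl, re_mul_mul_inv hq]

end Quaternion

theorem stmt_16_general (α β : ℝ) (v w l r : ℍ[ℝ])
    (hv0 : v.re = 0) (hw0 : w.re = 0)
    (hl : l = (Real.cos α : ℍ[ℝ]) + Real.sin α • v)
    (hr : r = (Real.cos β : ℍ[ℝ]) + Real.sin β • w)
    (hcos : Real.cos α ≠ Real.cos β) :
    ∀ q : ℍ[ℝ], l * q * r⁻¹ = q → q = 0 := by
  intro q hq
  by_contra hq0
  have hre := re_eq_of_mul_mul_inv_eq hq0 hq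
  simp only [hl, hr, re_add, re_coe, re_smul, hv0, hw0, smul_zero, add_zero] at hre
  exact hcos hre

/-- If `l = cos α + sin α • v` and `r = cos β + sin β • w` with `v, w` purely imaginary unit
quaternions, `α, β ∈ (0, π)` and `cos α ≠ cos β`, then `q ↦ l q r⁻¹` has no nonzero fixed
point. -/
theorem stmt_16 (α β : ℝ) (v w l r : ℍ[ℝ])
    (hv0 : v.re = 0) (hv1 : ‖v‖ = 1) (hw0 : w.re = 0) (hw1 : ‖w‖ = 1)
    (hα : α ∈ Set.Ioo 0 Real.pi) (hβ : β ∈ Set.Ioo 0 Real.pi)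
    (hl : l = (Real.cos α : ℍ[ℝ]) + Real.sin α • v)
    (hr : r = (Real.cos β : ℍ[ℝ]) + Real.sin β • w)
    (hcos : Real.cos α ≠ Real.cos β) :
    ∀ q : ℍ[ℝ], l * q * r⁻¹ = q → q = 0 :=
  stmt_16_general α β v w l r hv0 hw0 hl hr hcos
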